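/- arXiv:0910.1939 — 3 statements merged into one kernel-verified Lean document; each statement's English description precedes it below -/
import Mathlib

section
/- Every non-circular standard weighted graph Gamma is birationally equivalent to a standard weighted graph Gamma' with the same underlying graph and the same weight sequences on all linear segments, such that for every connected component G of Gamma_0: if G contains an end-vertex of Gamma, then every branching point in G has weight 0 in Gamma'; otherwise every branching point in G has weight 0 in Gamma' with one exception, whose weight in Gamma' equals the sum of the Gamma-weights of the branching points lying in G. -/
/-- A weighted graph: a finite simple graph on a finite set of natural-number
vertices, with an integer weight attached to each vertex. -/
structure WGraph where
  verts : Finset ℕ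
  adj : ℕ → ℕ → Bool
  symm : ∀ u v, adj u v = true → adj v u = true
  loopless : ∀ v, adj v v = false
  support : ∀ u v, adj u v = true → u ∈ verts ∧ v ∈ verts
  wt : ℕ → ℤ

namespace WGraph

/-- The degree of a vertex. -/
def deg (G : WGraph) (v : ℕ) : ℕ := (G.verts.filter (fun u => G.adj v u = true)).card

/-- A branching point: a vertex of degree at least `3`. -/
def Branch (G : WGraph) (v : ℕ) : Prop := v ∈ G.verts ∧ 3 ≤ G.deg v

/-- The graph is connected (and nonempty). -/
def Connected (G : WGraph) : Prop :=
  G.verts.Nonempty ∧ ∀ u ∈ G.verts, ∀ v ∈ G.verts,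
    Relation.ReflTransGen (fun a b => G.adj a b = true) u v

/-- A circular graph: a nonempty connected graph all of whose vertices have degree `2`,
i.e. a cycle. -/
def IsCircular (G : WGraph) : Prop :=
  G.verts.Nonempty ∧ G.Connected ∧ ∀ v ∈ G.verts, G.deg v = 2

/-- The set of non-branching vertices. -/
def NB (G : WGraph) : Set ℕ := {v | v ∈ G.verts ∧ G.deg v < 3}

/-- A linear segment: a connected component of the graph obtained by deleting
the branching points. -/
def IsSegment (G : WGraph) (S : Set ℕ) : Prop :=
  ∃ v ∈ G.NB, S = {u | Relation.ReflTransGen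
    (fun a b => a ∈ G.NB ∧ b ∈ G.NB ∧ G.adj a b = true) v u}

/-- `l` is a consecutive enumeration of the linear segment `S`. -/
def SegList (G : WGraph) (S : Set ℕ) (l : List ℕ) : Prop :=
  l.Nodup ∧ (∀ v, v ∈ l ↔ v ∈ S) ∧ l.Chain' (fun a b => G.adj a b = true)

/-- A standard weight sequence: all weights zero, or an even number `2k ≥ 0` of zeros
followed by weights `≤ -2`. -/
def StdSeq (m : List ℤ) : Prop :=
  (∀ x ∈ m, x = 0) ∨
  ∃ (k : ℕ) (ws : List ℤ), m = List.replicate (2 * k) 0 ++ ws ∧ ∀ x ∈ ws, x ≤ -2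

/-- A standard weighted graph: connected, and every linear segment, enumerated
consecutively starting (when the segment is adjacent to exactly one branching point)
from the vertex adjacent to that branching point, has a standard weight sequence. -/
def IsStandard (G : WGraph) : Prop :=
  G.Connected ∧
  ∀ S, G.IsSegment S → ∃ l, G.SegList S l ∧ StdSeq (l.map G.wt) ∧
    ∀ b, G.Branch b → (∃ v ∈ S, G.adj b v = true) →
      (∀ b', G.Branch b' → (∃ v' ∈ S, G.adj b' v' = true) → b' = b) →
      ∃ v0, l.head? = some v0 ∧ G.adj b v0 = true

/-- `G'` is obtained from `G` by the inner blowup at the edge `uv`, creating the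
new vertex `x`: the edge `uv` is deleted, `x` gets weight `-1` and is joined to
`u` and `v`, and the weights of `u` and `v` drop by `1`. -/
def IsInnerBlowup (G G' : WGraph) (u v x : ℕ) : Prop :=
  G.adj u v = true ∧ x ∉ G.verts ∧
  G'.verts = insert x G.verts ∧
  (∀ a b, G'.adj a b = true ↔
    ((G.adj a b = true ∧ ¬(a = u ∧ b = v) ∧ ¬(a = v ∧ b = u)) ∨
     (a = x ∧ (b = u ∨ b = v)) ∨ (b = x ∧ (a = u ∨ a = v)))) ∧
  (∀ a, G'.wt a = if a = x then -1 else if a = u then G.wt a - 1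
    else if a = v then G.wt a - 1 else G.wt a)

/-- `G'` is obtained from `G` by the outer blowup at the vertex `v`, creating the
new vertex `x` of weight `-1` joined only to `v`; the weight of `v` drops by `1`. -/
def IsOuterBlowup (G G' : WGraph) (v x : ℕ) : Prop :=
  v ∈ G.verts ∧ x ∉ G.verts ∧
  G'.verts = insert x G.verts ∧
  (∀ a b, G'.adj a b = true ↔
    (G.adj a b = true ∨ (a = x ∧ b = v) ∨ (b = x ∧ a = v))) ∧
  (∀ a, G'.wt a = if a = x then -1 else if a = v then G.wt a - 1 else G.wt a)

/-- A single blowup. -/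
def BlowupStep (G G' : WGraph) : Prop :=
  (∃ u v x, IsInnerBlowup G G' u v x) ∨ (∃ v x, IsOuterBlowup G G' v x)

/-- A single blowup or blowdown (a blowdown being the inverse of a blowup). -/
def Move (G G' : WGraph) : Prop := BlowupStep G G' ∨ BlowupStep G' G

/-- A weight-preserving isomorphism of weighted graphs. -/
def WIso (G G' : WGraph) : Prop :=
  ∃ f : ℕ → ℕ, Set.BijOn f (G.verts : Set ℕ) (G'.verts : Set ℕ) ∧
    (∀ u ∈ G.verts, ∀ v ∈ G.verts, G'.adj (f u) (f v) = G.adj u v) ∧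
    (∀ v ∈ G.verts, G'.wt (f v) = G.wt v)

/-- Birational equivalence of weighted graphs: the equivalence relation generated by
blowups, blowdowns and weight-preserving isomorphisms. -/
def BirEq : WGraph → WGraph → Prop :=
  Relation.EqvGen (fun G G' => Move G G' ∨ WIso G G')

end WGraph

namespace WGraph

/-- A linear segment of type `[[0_{2k+1}]]`: an odd number of vertices, all of
weight zero. -/
def OddZeroSegment (G : WGraph) (S : Set ℕ) : Prop :=
  G.IsSegment S ∧ ∃ l, G.SegList S l ∧ Odd l.length ∧ ∀ v ∈ l, G.wt v = 0

/-- The vertex set of the subgraph `Γ₀`: the branching points together with all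
linear segments of type `[[0_{2k+1}]]`. -/
def Gamma0V (G : WGraph) : Set ℕ :=
  {v | G.Branch v ∨ ∃ S, G.OddZeroSegment S ∧ v ∈ S}

/-- The adjacency of the subgraph `Γ₀`: edges of `Γ` inside the segments of type
`[[0_{2k+1}]]` and the edges joining these segments to branching points (but not
edges joining two branching points). -/
def Adj0 (G : WGraph) (a b : ℕ) : Prop :=
  G.adj a b = true ∧ a ∈ G.Gamma0V ∧ b ∈ G.Gamma0V ∧ ¬(G.Branch a ∧ G.Branch b)

/-- The connected component of `v` in the subgraph `Γ₀`. -/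
def Comp0 (G : WGraph) (v : ℕ) : Set ℕ := {u | Relation.ReflTransGen G.Adj0 v u}

end WGraph

attribute [local instance] Classical.propDecidable

/-!
Only the weights of branch points change, so standardness and the weights on linear segments
are preserved. The basic move: if `z` has weight `0` and neighbours `u` and `c`, blowing up the
edge `uz` and then blowing down `z` (whose weight has dropped to `-1`) gives back the same graph
with one unit of weight moved from `u` to `c`; if `z` is an end-vertex hanging at `u`, the same
two steps, the blowdown now an outer one, just lower the weight of `u` by one. Each move carries
the unit two steps along a path, so along a segment `[[0_{2k+1}]]` it travels from one end to the
other: between the two branch points the segment joins, hence between any two branch points of a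
component of `Γ₀`, or out of the graph through an end-vertex of `Γ`. Thus within a component of
`Γ₀` all branch weight can be gathered at one branch point, and removed altogether when the
component contains an end-vertex.
-/

theorem List.IsChain.cons_append_singleton {α : Type*} {R : α → α → Prop} {l : List α}
    {c c' a b : α} (hl : l.IsChain R) (ha : l.head? = some a) (hb : l.getLast? = some b)
    (hca : R c a) (hbc : R b c') : (c :: (l ++ [c'])).IsChain R := by
  simp [List.isChain_cons, List.isChain_append, List.head?_append, ha, hb, hca, hbc, hl]

namespace WGraph

def withWt (G : WGraph) (w : ℕ → ℤ) : WGraph := { G with wt := w }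

@[simp] theorem withWt_wt (G : WGraph) : G.withWt G.wt = G := rfl

theorem Branch.notMem_NB {G : WGraph} {c : ℕ} (hc : G.Branch c) : c ∉ G.NB :=
  fun h => absurd hc.2 (not_le.2 h.2)

theorem Branch.ne_of_mem_NB {G : WGraph} {c z : ℕ} (hc : G.Branch c) (hz : z ∈ G.NB) :
    z ≠ c :=
  fun h => hc.notMem_NB (h ▸ hz)

theorem mem_NB_of_isSegment {G : WGraph} {S : Set ℕ} (hS : G.IsSegment S) {v : ℕ}
    (hv : v ∈ S) : v ∈ G.NB := by
  obtain ⟨v0, hv0, rfl⟩ := hS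
  rcases Relation.ReflTransGen.cases_tail hv with rfl | ⟨_, -, h⟩
  exacts [hv0, h.2.1]

theorem mem_of_isSegment_of_adj {G : WGraph} {S : Set ℕ} (hS : G.IsSegment S) {a b : ℕ}
    (ha : a ∈ S) (hb : b ∈ G.NB) (hab : G.adj a b = true) : b ∈ S := by
  have haNB := mem_NB_of_isSegment hS ha
  obtain ⟨v0, -, rfl⟩ := hS
  exact Relation.ReflTransGen.tail ha ⟨haNB, hb, hab⟩

theorem OddZeroSegment.wt_eq_zero {G : WGraph} {S : Set ℕ} (hS : G.OddZeroSegment S) {z : ℕ}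
    (hz : z ∈ S) : G.wt z = 0 := by
  obtain ⟨-, l, ⟨-, hmem, -⟩, -, hzero⟩ := hS
  exact hzero z ((hmem z).2 hz)

theorem IsStandard.withWt {G : WGraph} (hG : G.IsStandard) {w : ℕ → ℤ}
    (hw : ∀ z ∈ G.NB, w z = G.wt z) : (G.withWt w).IsStandard := by
  refine ⟨hG.1, fun S hS => ?_⟩
  obtain ⟨l, hl, hstd, hhead⟩ := hG.2 S hS
  refine ⟨l, hl, ?_, hhead⟩
  show StdSeq (l.map w)
  rwa [List.map_congr_left fun x hx => hw x (mem_NB_of_isSegment hS ((hl.2.1 x).1 hx))]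

theorem card_le_deg (G : WGraph) {v : ℕ} {s : Finset ℕ} (hs : ∀ a ∈ s, G.adj v a = true) :
    s.card ≤ G.deg v :=
  Finset.card_le_card fun a ha => Finset.mem_filter.2 ⟨(G.support _ _ (hs a ha)).2, hs a ha⟩

theorem two_le_deg (G : WGraph) {v a b : ℕ} (ha : G.adj v a = true) (hb : G.adj v b = true)
    (hab : a ≠ b) : 2 ≤ G.deg v := by
  simpa [Finset.card_pair hab] using G.card_le_deg (s := {a, b}) (by simp [ha, hb])

theorem three_le_deg (G : WGraph) {v a b c : ℕ} (ha : G.adj v a = true) (hb : G.adj v b = true)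
    (hc : G.adj v c = true) (hab : a ≠ b) (hac : a ≠ c) (hbc : b ≠ c) : 3 ≤ G.deg v := by
  have h3 : ({a, b, c} : Finset ℕ).card = 3 :=
    Finset.card_eq_three.2 ⟨a, b, c, hab, hac, hbc, rfl⟩
  simpa [h3] using G.card_le_deg (s := {a, b, c}) (by simp [ha, hb, hc])

theorem eq_or_eq_of_deg_le_two (G : WGraph) {v a b : ℕ} (hv : G.deg v ≤ 2)
    (ha : G.adj v a = true) (hb : G.adj v b = true) (hab : a ≠ b) {y : ℕ}
    (hy : G.adj v y = true) : y = a ∨ y = b := by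
  by_contra! h
  have := G.three_le_deg hy ha hb h.1 h.2 hab
  omega

theorem eq_of_deg_le_one (G : WGraph) {v a : ℕ} (hv : G.deg v ≤ 1) (ha : G.adj v a = true)
    {y : ℕ} (hy : G.adj v y = true) : y = a := by
  by_contra h
  have := G.two_le_deg hy ha h
  omega

theorem BirEq.refl (G : WGraph) : BirEq G G := Relation.EqvGen.refl _

theorem BirEq.symm {G G' : WGraph} (h : BirEq G G') : BirEq G' G := Relation.EqvGen.symm _ _ h

theorem BirEq.trans {G₁ G₂ G₃ : WGraph} (h₁ : BirEq G₁ G₂) (h₂ : BirEq G₂ G₃) :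
    BirEq G₁ G₃ :=
  Relation.EqvGen.trans _ _ _ h₁ h₂

theorem birEq_of_isInnerBlowup {G G' : WGraph} {u v x : ℕ} (h : IsInnerBlowup G G' u v x) :
    BirEq G G' :=
  .rel _ _ (Or.inl (Or.inl (Or.inl ⟨u, v, x, h⟩)))

theorem birEq_of_isOuterBlowup {G G' : WGraph} {v x : ℕ} (h : IsOuterBlowup G G' v x) :
    BirEq G G' :=
  .rel _ _ (Or.inl (Or.inl (Or.inr ⟨v, x, h⟩)))

theorem birEq_of_wIso {G G' : WGraph} (h : WIso G G') : BirEq G G' := .rel _ _ (Or.inr h)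

def relabel (G : WGraph) (σ : Equiv.Perm ℕ) : WGraph where
  verts := G.verts.map σ.toEmbedding
  adj a b := G.adj (σ.symm a) (σ.symm b)
  symm _ _ := G.symm _ _
  loopless _ := G.loopless _
  support a b h := by simpa [Finset.mem_map_equiv] using G.support _ _ h
  wt a := G.wt (σ.symm a)

theorem wIso_relabel (G : WGraph) (σ : Equiv.Perm ℕ) : WIso G (G.relabel σ) := by
  refine ⟨σ, ?_, fun u _ v _ => by simp [relabel], fun v _ => by simp [relabel]⟩
  rw [relabel, Finset.coe_map]
  exact σ.injective.injOn.bijOn_image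

theorem adj_eq_false_of_notMem (G : WGraph) {x : ℕ} (hx : x ∉ G.verts) (y : ℕ) :
    G.adj x y = false ∧ G.adj y x = false := by
  simp only [Bool.eq_false_iff, ne_eq]
  exact ⟨fun h => hx (G.support _ _ h).1, fun h => hx (G.support _ _ h).2⟩

def innerBlowup (G : WGraph) (u v x : ℕ) (huv : G.adj u v = true) (hx : x ∉ G.verts) :
    WGraph where
  verts := insert x G.verts
  adj a b := decide ((G.adj a b = true ∧ ¬(a = u ∧ b = v) ∧ ¬(a = v ∧ b = u)) ∨
    (a = x ∧ (b = u ∨ b = v)) ∨ (b = x ∧ (a = u ∨ a = v)))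
  symm a b := by
    have := G.symm a b; have := G.symm b a
    grind
  loopless a := by
    have := G.loopless a; have := G.support u v huv
    grind
  support a b := by
    have := G.support a b; have := G.support u v huv
    grind
  wt a := if a = x then -1 else if a = u then G.wt a - 1
    else if a = v then G.wt a - 1 else G.wt a

theorem isInnerBlowup_innerBlowup (G : WGraph) {u v x : ℕ} (huv : G.adj u v = true)
    (hx : x ∉ G.verts) : IsInnerBlowup G (G.innerBlowup u v x huv hx) u v x :=
  ⟨huv, hx, rfl, fun _ _ => decide_eq_true_iff, fun _ => rfl⟩

theorem birEq_transfer_through_zero_vertex {G : WGraph} {u z c : ℕ} (w : ℕ → ℤ)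
    (huz : G.adj u z = true) (hzc : G.adj z c = true) (huc : u ≠ c)
    (hz : ∀ y, G.adj z y = true → y = u ∨ y = c) (hwz : w z = 0) :
    BirEq (G.withWt w) (G.withWt (w - Pi.single u 1 + Pi.single c 1)) := by
  obtain ⟨x, hx⟩ := G.verts.exists_notMem
  have hG1 := (G.withWt w).isInnerBlowup_innerBlowup huz hx
  set G1 := (G.withWt w).innerBlowup u z x huz hx
  -- `G1` is also the blowup, at the edge `xc`, of the target graph with `z` renamed to `x`.
  set G2 := (G.withWt (w - Pi.single u 1 + Pi.single c 1)).relabel (Equiv.swap z x)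
  have hG2 : IsInnerBlowup G2 G1 x c z := by
    have hs : ∀ p q, G.adj p q = true → G.adj q p = true := G.symm
    have hl := G.loopless
    have hxf := G.adj_eq_false_of_notMem hx
    have hu := G.support u z huz
    have hc := G.support z c hzc
    have hxz : x ≠ z := by grind
    have hxc : x ≠ c := by grind
    have hzc' : z ≠ c := by grind
    refine ⟨?_, ?_, ?_, fun a b => ?_, fun a => ?_⟩
    · simpa [G2, relabel, withWt, Equiv.swap_apply_def, hxz, hzc'.symm, hxc.symm] using hzc
    · simp [G2, relabel, withWt, Finset.mem_map_equiv, hx]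
    · ext a
      simp only [G1, G2, innerBlowup, relabel, withWt, Finset.mem_insert, Finset.mem_map_equiv,
        Equiv.symm_swap, Equiv.swap_apply_def]
      grind
    · simp only [G1, G2, innerBlowup, relabel, withWt, Equiv.symm_swap, Equiv.swap_apply_def]
      grind
    · simp only [G1, G2, innerBlowup, relabel, withWt, Equiv.symm_swap, Equiv.swap_apply_def,
        Pi.add_apply, Pi.sub_apply, Pi.single_apply]
      grind
  exact (birEq_of_isInnerBlowup hG1).trans ((birEq_of_isInnerBlowup hG2).symm.trans
    (birEq_of_wIso (wIso_relabel _ _)).symm)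

theorem birEq_drop_through_zero_leaf {G : WGraph} {u z : ℕ} (w : ℕ → ℤ)
    (huz : G.adj u z = true) (hz : ∀ y, G.adj z y = true → y = u) (hwz : w z = 0) :
    BirEq (G.withWt w) (G.withWt (w - Pi.single u 1)) := by
  obtain ⟨x, hx⟩ := G.verts.exists_notMem
  have hG1 := (G.withWt w).isInnerBlowup_innerBlowup huz hx
  set G1 := (G.withWt w).innerBlowup u z x huz hx
  -- `G1` is also the outer blowup, at `x`, of the target graph with `z` renamed to `x`.
  set G2 := (G.withWt (w - Pi.single u 1)).relabel (Equiv.swap z x)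
  have hG2 : IsOuterBlowup G2 G1 x z := by
    have hs : ∀ p q, G.adj p q = true → G.adj q p = true := G.symm
    have hl := G.loopless
    have hxf := G.adj_eq_false_of_notMem hx
    have hu := G.support u z huz
    refine ⟨?_, ?_, ?_, fun a b => ?_, fun a => ?_⟩
    · simp [G2, relabel, withWt, Finset.mem_map_equiv, hu.2]
    · simp [G2, relabel, withWt, Finset.mem_map_equiv, hx]
    · ext a
      simp only [G1, G2, innerBlowup, relabel, withWt, Finset.mem_insert, Finset.mem_map_equiv,
        Equiv.symm_swap, Equiv.swap_apply_def]
      grind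
    · simp only [G1, G2, innerBlowup, relabel, withWt, Equiv.symm_swap, Equiv.swap_apply_def]
      grind
    · simp only [G1, G2, innerBlowup, relabel, withWt, Equiv.symm_swap, Equiv.swap_apply_def,
        Pi.sub_apply, Pi.single_apply]
      grind
  exact (birEq_of_isInnerBlowup hG1).trans ((birEq_of_isOuterBlowup hG2).symm.trans
    (birEq_of_wIso (wIso_relabel _ _)).symm)

theorem birEq_transfer_along_path (G : WGraph) : ∀ (l : List ℕ) (c c' : ℕ) (w : ℕ → ℤ),
    Odd l.length → (c :: (l ++ [c'])).IsChain (fun a b => G.adj a b = true) →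
    (c :: (l ++ [c'])).Nodup → (∀ z ∈ l, G.deg z ≤ 2 ∧ w z = 0) →
    BirEq (G.withWt w) (G.withWt (w - Pi.single c 1 + Pi.single c' 1))
  | [], _, _, _, hodd, _, _, _ => absurd hodd (by simp)
  | [z], c, c', w, _, hch, hnd, hz => by
    simp only [List.singleton_append, List.isChain_cons_cons] at hch
    have hcc' : c ≠ c' := by grind [List.nodup_cons]
    obtain ⟨hdeg, hwz⟩ := hz z (by simp)
    exact birEq_transfer_through_zero_vertex w hch.1 hch.2.1 hcc'
      (fun y hy => G.eq_or_eq_of_deg_le_two hdeg (G.symm _ _ hch.1) hch.2.1 hcc' hy) hwz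
  | z :: z' :: rest, c, c', w, hodd, hch, hnd, hz => by
    simp only [List.cons_append, List.isChain_cons_cons] at hch
    simp only [List.cons_append, List.nodup_cons] at hnd
    have hcz' : c ≠ z' := by grind
    obtain ⟨hdeg, hwz⟩ := hz z (by simp)
    have hfirst := birEq_transfer_through_zero_vertex w hch.1 hch.2.1 hcz'
      (fun y hy => G.eq_or_eq_of_deg_le_two hdeg (G.symm _ _ hch.1) hch.2.1 hcz' hy) hwz
    have hrest := birEq_transfer_along_path G rest z' c' (w - Pi.single c 1 + Pi.single z' 1)
      (by simpa [Nat.odd_add_one, parity_simps] using hodd) hch.2.2 (by simpa using hnd.2.2)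
      (fun y hy => ⟨(hz y (by simp [hy])).1, by
        have : y ≠ c ∧ y ≠ z' := by grind
        simp [this, (hz y (by simp [hy])).2]⟩)
    rw [show w - Pi.single c 1 + Pi.single z' 1 - Pi.single z' 1 + Pi.single c' 1 =
      w - Pi.single c 1 + Pi.single c' 1 by abel] at hrest
    exact hfirst.trans hrest

theorem birEq_drop_along_path (G : WGraph) : ∀ (l : List ℕ) (c : ℕ) (w : ℕ → ℤ),
    Odd l.length → (c :: l).IsChain (fun a b => G.adj a b = true) → (c :: l).Nodup →
    (∀ z ∈ l, G.deg z ≤ 2 ∧ w z = 0) → (∀ e ∈ (c :: l).getLast?, G.deg e ≤ 1) →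
    BirEq (G.withWt w) (G.withWt (w - Pi.single c 1))
  | [], _, _, hodd, _, _, _, _ => absurd hodd (by simp)
  | [z], c, w, _, hch, _, hz, hend => by
    simp only [List.isChain_cons_cons] at hch
    exact birEq_drop_through_zero_leaf w hch.1
      (fun y hy => G.eq_of_deg_le_one (hend z (by simp)) (G.symm _ _ hch.1) hy) (hz z (by simp)).2
  | z :: z' :: rest, c, w, hodd, hch, hnd, hz, hend => by
    simp only [List.isChain_cons_cons] at hch
    simp only [List.nodup_cons] at hnd
    have hcz' : c ≠ z' := by grind
    obtain ⟨hdeg, hwz⟩ := hz z (by simp)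
    have hfirst := birEq_transfer_through_zero_vertex w hch.1 hch.2.1 hcz'
      (fun y hy => G.eq_or_eq_of_deg_le_two hdeg (G.symm _ _ hch.1) hch.2.1 hcz' hy) hwz
    have hrest := birEq_drop_along_path G rest z' (w - Pi.single c 1 + Pi.single z' 1)
      (by simpa [Nat.odd_add_one, parity_simps] using hodd) hch.2.2 (List.nodup_cons.2 hnd.2.2)
      (fun y hy => ⟨(hz y (by simp [hy])).1, by
        have : y ≠ c ∧ y ≠ z' := by grind
        simp [this, (hz y (by simp [hy])).2]⟩)
      (fun e he => hend e (by simpa [List.getLast?_cons_cons] using he))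
    rw [show w - Pi.single c 1 + Pi.single z' 1 - Pi.single z' 1 = w - Pi.single c 1 by abel]
      at hrest
    exact hfirst.trans hrest

theorem adj_of_isChain_append_cons (G : WGraph) {s t : List ℕ} {v : ℕ}
    (h : (s ++ v :: t).IsChain (fun a b => G.adj a b = true)) :
    (∀ p ∈ s.getLast?, G.adj v p = true) ∧ (∀ q ∈ t.head?, G.adj v q = true) := by
  rw [List.isChain_append, List.isChain_cons] at h
  exact ⟨fun p hp => G.symm _ _ (h.2.2 p hp v rfl), h.2.1.1⟩

theorem exists_adj_of_ne_singleton (G : WGraph) {l : List ℕ}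
    (hch : l.IsChain (fun a b => G.adj a b = true)) {v : ℕ} (hv : v ∈ l) (hl : l ≠ [v]) :
    ∃ p ∈ l, G.adj v p = true := by
  obtain ⟨s, t, rfl⟩ := List.append_of_mem hv
  obtain ⟨hs, ht⟩ := G.adj_of_isChain_append_cons hch
  rcases t with _ | ⟨q, t⟩
  · obtain ⟨p, hp⟩ : ∃ p, s.getLast? = some p := by
      cases s using List.reverseRecOn <;> simp_all
    exact ⟨p, by simp [List.mem_of_getLast? hp], hs p hp⟩
  · exact ⟨q, by simp, ht q rfl⟩

theorem exists_two_adj_of_ne_head_of_ne_getLast (G : WGraph) {l : List ℕ} (hnd : l.Nodup)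
    (hch : l.IsChain (fun a b => G.adj a b = true)) {v : ℕ} (hv : v ∈ l)
    (hh : l.head? ≠ some v) (hl : l.getLast? ≠ some v) :
    ∃ p ∈ l, ∃ q ∈ l, p ≠ q ∧ G.adj v p = true ∧ G.adj v q = true := by
  obtain ⟨s, t, rfl⟩ := List.append_of_mem hv
  obtain ⟨hs, ht⟩ := G.adj_of_isChain_append_cons hch
  obtain ⟨p, hp⟩ : ∃ p, s.getLast? = some p := by
    cases s using List.reverseRecOn <;> simp_all
  obtain ⟨q, t, rfl⟩ : ∃ q t', t = q :: t' := by
    cases t <;> simp_all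
  refine ⟨p, by simp [List.mem_of_getLast? hp], q, by simp, ?_, hs p hp, ht q rfl⟩
  rintro rfl
  exact List.disjoint_of_nodup_append hnd (List.mem_of_getLast? hp) (by simp)

theorem head_or_getLast_of_adj_notMem (G : WGraph) {l : List ℕ} (hnd : l.Nodup)
    (hch : l.IsChain (fun a b => G.adj a b = true)) {v c : ℕ} (hv : v ∈ l) (hdeg : G.deg v < 3)
    (hvc : G.adj v c = true) (hcl : c ∉ l) : l.head? = some v ∨ l.getLast? = some v := by
  by_contra! h
  obtain ⟨p, hp, q, hq, hpq, hvp, hvq⟩ :=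
    G.exists_two_adj_of_ne_head_of_ne_getLast hnd hch hv h.1 h.2
  have := G.three_le_deg hvp hvq hvc hpq (by grind) (by grind)
  omega

theorem head_or_getLast_of_deg_le_one (G : WGraph) {l : List ℕ} (hnd : l.Nodup)
    (hch : l.IsChain (fun a b => G.adj a b = true)) {v : ℕ} (hv : v ∈ l)
    (hdeg : G.deg v ≤ 1) : l.head? = some v ∨ l.getLast? = some v := by
  by_contra! h
  obtain ⟨p, -, q, -, hpq, hvp, hvq⟩ :=
    G.exists_two_adj_of_ne_head_of_ne_getLast hnd hch hv h.1 h.2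
  have := G.two_le_deg hvp hvq hpq
  omega

theorem isChain_adj_reverse (G : WGraph) {l : List ℕ}
    (hch : l.IsChain (fun a b => G.adj a b = true)) :
    l.reverse.IsChain (fun a b => G.adj a b = true) :=
  List.isChain_reverse.2 (hch.imp fun _ _ => G.symm _ _)

theorem isChain_cons_append_or_reverse (G : WGraph) {l : List ℕ} (hnd : l.Nodup)
    (hch : l.IsChain (fun a b => G.adj a b = true)) (hdeg : ∀ x ∈ l, G.deg x < 3)
    {c c' v v' : ℕ} (hcl : c ∉ l) (hc'l : c' ∉ l) (hcc' : c ≠ c') (hv : v ∈ l)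
    (hv' : v' ∈ l) (hcv : G.adj c v = true) (hc'v' : G.adj c' v' = true) :
    (c :: (l ++ [c'])).IsChain (fun a b => G.adj a b = true) ∨
      (c :: (l.reverse ++ [c'])).IsChain (fun a b => G.adj a b = true) := by
  have hvc' : G.adj v' c' = true := G.symm _ _ hc'v'
  by_cases hl : l = [v]
  · subst hl
    obtain rfl : v' = v := by simpa using hv'
    exact .inl (hch.cons_append_singleton rfl rfl hcv hvc')
  have hvv' : v ≠ v' := by
    rintro rfl
    obtain ⟨p, hp, hvp⟩ := G.exists_adj_of_ne_singleton hch hv hl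
    have := G.three_le_deg hvp (G.symm _ _ hcv) (G.symm _ _ hc'v') (by grind) (by grind) hcc'
    have := hdeg v hv
    omega
  have hchR := G.isChain_adj_reverse hch
  rcases G.head_or_getLast_of_adj_notMem hnd hch hv (hdeg v hv) (G.symm _ _ hcv) hcl with
    h | h <;>
  rcases G.head_or_getLast_of_adj_notMem hnd hch hv' (hdeg v' hv') hvc' hc'l with h' | h'
  · exact absurd (Option.some.inj (h.symm.trans h')) hvv'
  · exact .inl (hch.cons_append_singleton h h' hcv hvc')
  · exact .inr (hchR.cons_append_singleton (by simpa using h) (by simpa using h') hcv hvc')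
  · exact absurd (Option.some.inj (h.symm.trans h')) hvv'

theorem isChain_cons_or_reverse_of_leaf (G : WGraph) {l : List ℕ} (hnd : l.Nodup)
    (hch : l.IsChain (fun a b => G.adj a b = true)) (hdeg : ∀ x ∈ l, G.deg x < 3)
    {c v u : ℕ} (hcl : c ∉ l) (hv : v ∈ l) (hcv : G.adj c v = true) (hu : u ∈ l)
    (hdu : G.deg u ≤ 1) :
    ((c :: l).IsChain (fun a b => G.adj a b = true) ∧ (c :: l).getLast? = some u) ∨
      ((c :: l.reverse).IsChain (fun a b => G.adj a b = true) ∧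
        (c :: l.reverse).getLast? = some u) := by
  by_cases hl : l = [v]
  · subst hl
    obtain rfl : u = v := by simpa using hu
    exact .inl ⟨by simp [hcv], rfl⟩
  have hvu : v ≠ u := by
    rintro rfl
    obtain ⟨p, hp, hvp⟩ := G.exists_adj_of_ne_singleton hch hv hl
    have := G.two_le_deg hvp (G.symm _ _ hcv) (by grind)
    omega
  have hchR := G.isChain_adj_reverse hch
  rcases G.head_or_getLast_of_adj_notMem hnd hch hv (hdeg v hv) (G.symm _ _ hcv) hcl with
    h | h <;>
  rcases G.head_or_getLast_of_deg_le_one hnd hch hu hdu with h' | h'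
  · exact absurd (Option.some.inj (h.symm.trans h')) hvu
  · exact .inl ⟨by simp [List.isChain_cons, h, hcv, hch], by simp [List.getLast?_cons, h']⟩
  · exact .inr ⟨by simp [List.isChain_cons, h, hcv, hchR], by simp [List.getLast?_cons, h']⟩
  · exact absurd (Option.some.inj (h.symm.trans h')) hvu

def Touches (G : WGraph) (c : ℕ) (S : Set ℕ) : Prop := ∃ v ∈ S, G.adj c v = true

theorem birEq_transfer_through_segment {G : WGraph} {S : Set ℕ} (hS : G.OddZeroSegment S)
    {c c' : ℕ} (hc : G.Branch c) (hc' : G.Branch c') (htc : G.Touches c S)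
    (htc' : G.Touches c' S) (w : ℕ → ℤ) (hw : ∀ z ∈ S, w z = 0) :
    BirEq (G.withWt w) (G.withWt (w - Pi.single c 1 + Pi.single c' 1)) := by
  rcases eq_or_ne c c' with rfl | hcc'
  · simpa using BirEq.refl (G.withWt w)
  obtain ⟨hSeg, l, ⟨hnd, hmem, hch⟩, hodd, -⟩ := hS
  have hNB : ∀ x ∈ l, x ∈ G.NB := fun x hx => mem_NB_of_isSegment hSeg ((hmem x).1 hx)
  have hcl : c ∉ l := fun h => hc.notMem_NB (hNB c h)
  have hc'l : c' ∉ l := fun h => hc'.notMem_NB (hNB c' h)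
  have hzero : ∀ z ∈ l, G.deg z ≤ 2 ∧ w z = 0 :=
    fun z hz => ⟨Nat.le_of_lt_succ (hNB z hz).2, hw z ((hmem z).1 hz)⟩
  obtain ⟨v, hvS, hcv⟩ := htc
  obtain ⟨v', hv'S, hc'v'⟩ := htc'
  rcases G.isChain_cons_append_or_reverse hnd hch (fun x hx => (hNB x hx).2) hcl hc'l hcc'
    ((hmem v).2 hvS) ((hmem v').2 hv'S) hcv hc'v' with h | h
  · exact G.birEq_transfer_along_path l c c' w hodd h
      (by simp [List.nodup_append, hnd, hcl, hcc']; grind) hzero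
  · exact G.birEq_transfer_along_path l.reverse c c' w (by simpa using hodd) h
      (by simp [List.nodup_append, hnd, hcl, hcc']; grind) (by simpa using hzero)

theorem birEq_drop_through_segment {G : WGraph} {S : Set ℕ} (hS : G.OddZeroSegment S)
    {c : ℕ} (hc : G.Branch c) (htc : G.Touches c S) {u : ℕ} (hu : u ∈ S) (hdu : G.deg u = 1)
    (w : ℕ → ℤ) (hw : ∀ z ∈ S, w z = 0) :
    BirEq (G.withWt w) (G.withWt (w - Pi.single c 1)) := by
  obtain ⟨hSeg, l, ⟨hnd, hmem, hch⟩, hodd, -⟩ := hS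
  have hNB : ∀ x ∈ l, x ∈ G.NB := fun x hx => mem_NB_of_isSegment hSeg ((hmem x).1 hx)
  have hcl : c ∉ l := fun h => hc.notMem_NB (hNB c h)
  have hzero : ∀ z ∈ l, G.deg z ≤ 2 ∧ w z = 0 :=
    fun z hz => ⟨Nat.le_of_lt_succ (hNB z hz).2, hw z ((hmem z).1 hz)⟩
  obtain ⟨v, hvS, hcv⟩ := htc
  rcases G.isChain_cons_or_reverse_of_leaf hnd hch (fun x hx => (hNB x hx).2) hcl
    ((hmem v).2 hvS) hcv ((hmem u).2 hu) hdu.le with ⟨h, hlast⟩ | ⟨h, hlast⟩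
  · exact G.birEq_drop_along_path l c w hodd h (by simp [hnd, hcl]) hzero (by simp [hlast, hdu])
  · exact G.birEq_drop_along_path l.reverse c w (by simpa using hodd) h (by simp [hnd, hcl])
      (by simpa using hzero) (by simp [hlast, hdu])

theorem Adj0.symm {G : WGraph} {a b : ℕ} (h : G.Adj0 a b) : G.Adj0 b a :=
  ⟨G.symm _ _ h.1, h.2.2.1, h.2.1, fun hab => h.2.2.2 hab.symm⟩

theorem mem_comp0_comm {G : WGraph} {u v : ℕ} : u ∈ G.Comp0 v ↔ v ∈ G.Comp0 u :=
  have : Std.Symm G.Adj0 := ⟨fun _ _ => Adj0.symm⟩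
  ⟨Std.Symm.symm _ _, Std.Symm.symm _ _⟩

theorem comp0_eq_of_mem {G : WGraph} {u v : ℕ} (h : u ∈ G.Comp0 v) : G.Comp0 u = G.Comp0 v :=
  Set.ext fun _ => ⟨h.trans, (mem_comp0_comm.1 h).trans⟩

def Linked (G : WGraph) (c c' : ℕ) : Prop :=
  G.Branch c ∧ G.Branch c' ∧ ∃ S, G.OddZeroSegment S ∧ G.Touches c S ∧ G.Touches c' S

theorem mem_comp0_cases {G : WGraph} {b u : ℕ} (hb : G.Branch b) (hu : u ∈ G.Comp0 b) :
    (G.Branch u ∧ Relation.ReflTransGen G.Linked b u) ∨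
      ∃ S c, G.OddZeroSegment S ∧ u ∈ S ∧ G.Branch c ∧
        Relation.ReflTransGen G.Linked b c ∧ G.Touches c S := by
  induction hu with
  | refl => exact .inl ⟨hb, .refl⟩
  | @tail m u _ hmu ih =>
    obtain ⟨hadj, -, hu0, hnot⟩ := hmu
    rcases ih with ⟨hm, hbm⟩ | ⟨S, c, hS, hmS, hc, hbc, htc⟩
    · have hu : ¬G.Branch u := fun h => hnot ⟨hm, h⟩
      obtain ⟨S, hS, huS⟩ := hu0.resolve_left hu
      exact .inr ⟨S, m, hS, huS, hm, hbm, u, huS, hadj⟩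
    · by_cases hu : G.Branch u
      · exact .inl ⟨hu, hbc.tail ⟨hc, hu, S, hS, htc, m, hmS, G.symm _ _ hadj⟩⟩
      · obtain ⟨S', hS', huS'⟩ := hu0.resolve_left hu
        have huS := mem_of_isSegment_of_adj hS.1 hmS (mem_NB_of_isSegment hS'.1 huS') hadj
        exact .inr ⟨S, c, hS, huS, hc, hbc, htc⟩

theorem birEq_transfer_of_linked {G : WGraph} {c c' : ℕ}
    (h : Relation.ReflTransGen G.Linked c c') (w : ℕ → ℤ)
    (hw : ∀ z ∈ G.NB, w z = G.wt z) :
    BirEq (G.withWt w) (G.withWt (w - Pi.single c 1 + Pi.single c' 1)) := by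
  induction h using Relation.ReflTransGen.head_induction_on generalizing w with
  | refl => simpa using BirEq.refl (G.withWt w)
  | @head c m hcm _ ih =>
    obtain ⟨hc, hm, S, hS, htc, htm⟩ := hcm
    have hfirst := birEq_transfer_through_segment hS hc hm htc htm w fun z hz => by
      rw [hw z (mem_NB_of_isSegment hS.1 hz), hS.wt_eq_zero hz]
    have hrest := ih (w - Pi.single c 1 + Pi.single m 1) fun z hz => by
      simp [hw z hz, Pi.single_eq_of_ne (hc.ne_of_mem_NB hz),
        Pi.single_eq_of_ne (hm.ne_of_mem_NB hz)]
    rw [show w - Pi.single c 1 + Pi.single m 1 - Pi.single m 1 + Pi.single c' 1 =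
      w - Pi.single c 1 + Pi.single c' 1 by abel] at hrest
    exact hfirst.trans hrest

def Comp0HasEnd (G : WGraph) (v : ℕ) : Prop := ∃ u ∈ G.Comp0 v, G.deg u = 1

theorem birEq_drop_of_comp0HasEnd {G : WGraph} {b : ℕ} (hb : G.Branch b)
    (hend : G.Comp0HasEnd b) (w : ℕ → ℤ) (hw : ∀ z ∈ G.NB, w z = G.wt z) :
    BirEq (G.withWt w) (G.withWt (w - Pi.single b 1)) := by
  obtain ⟨u, hu, hdu⟩ := hend
  obtain ⟨S, c, hS, huS, hc, hbc, htc⟩ := (mem_comp0_cases hb hu).resolve_left fun h => by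
    have := h.1.2
    omega
  have hfirst := birEq_transfer_of_linked hbc w hw
  have hdrop := birEq_drop_through_segment hS hc htc huS hdu (w - Pi.single b 1 + Pi.single c 1)
    fun z hz => by
      have hz' := mem_NB_of_isSegment hS.1 hz
      simp [hw z hz', hS.wt_eq_zero hz, Pi.single_eq_of_ne (hb.ne_of_mem_NB hz'),
        Pi.single_eq_of_ne (hc.ne_of_mem_NB hz')]
  rw [show w - Pi.single b 1 + Pi.single c 1 - Pi.single c 1 = w - Pi.single b 1 by abel]
    at hdrop
  exact hfirst.trans hdrop

theorem birEq_add_zsmul {G : WGraph} {V : Set ℕ} {d : ℕ → ℤ} (hd : ∀ z ∈ V, d z = 0)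
    (h : ∀ w, (∀ z ∈ V, w z = G.wt z) → BirEq (G.withWt w) (G.withWt (w + d))) (k : ℤ)
    (w : ℕ → ℤ) (hw : ∀ z ∈ V, w z = G.wt z) :
    BirEq (G.withWt w) (G.withWt (w + k • d)) := by
  have hadm : ∀ j : ℤ, ∀ z ∈ V, (w + j • d) z = G.wt z := fun j z hz => by
    simp [hw z hz, hd z hz]
  induction k using Int.induction_on with
  | zero => simpa using BirEq.refl (G.withWt w)
  | succ i ih =>
    refine ih.trans ?_
    simpa [add_smul, add_assoc] using h _ (hadm i)
  | pred i ih =>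
    refine ih.trans (BirEq.symm ?_)
    simpa [sub_smul, add_assoc] using h _ (hadm (-i - 1))

noncomputable def branchesIn (G : WGraph) (v : ℕ) : Finset ℕ :=
  G.verts.filter fun b => G.Branch b ∧ b ∈ G.Comp0 v

/-- The exceptional branch point `b0` of a component of `Γ₀` without end-vertices (junk `0` when
the component has no branch point). -/
noncomputable def hub (G : WGraph) (v : ℕ) : ℕ :=
  if h : (G.branchesIn v).Nonempty then (G.branchesIn v).min' h else 0

noncomputable def normalizingShift (G : WGraph) (b : ℕ) : ℕ → ℤ :=
  (if G.Comp0HasEnd b then 0 else Pi.single (G.hub b) 1) - Pi.single b 1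

noncomputable def normalizedWt (G : WGraph) : ℕ → ℤ :=
  G.wt + ∑ b ∈ G.verts.filter G.Branch, G.wt b • G.normalizingShift b

theorem mem_branchesIn {G : WGraph} {v b : ℕ} :
    b ∈ G.branchesIn v ↔ G.Branch b ∧ b ∈ G.Comp0 v := by
  simp only [branchesIn, Finset.mem_filter, and_iff_right_iff_imp]
  exact fun h => h.1.1

theorem Branch.branchesIn_nonempty {G : WGraph} {v : ℕ} (hv : G.Branch v) :
    (G.branchesIn v).Nonempty :=
  ⟨v, mem_branchesIn.2 ⟨hv, .refl⟩⟩

theorem hub_mem_branchesIn {G : WGraph} {v : ℕ} (h : (G.branchesIn v).Nonempty) :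
    G.hub v ∈ G.branchesIn v := by
  rw [hub, dif_pos h]
  exact Finset.min'_mem _ h

theorem branchesIn_eq_of_mem {G : WGraph} {u v : ℕ} (h : u ∈ G.Comp0 v) :
    G.branchesIn u = G.branchesIn v := by
  simp only [branchesIn, comp0_eq_of_mem h]

theorem hub_eq_of_mem {G : WGraph} {u v : ℕ} (h : u ∈ G.Comp0 v) : G.hub u = G.hub v := by
  simp only [hub, branchesIn_eq_of_mem h]

theorem comp0HasEnd_iff_of_mem {G : WGraph} {u v : ℕ} (h : u ∈ G.Comp0 v) :
    G.Comp0HasEnd u ↔ G.Comp0HasEnd v := by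
  simp only [Comp0HasEnd, comp0_eq_of_mem h]

theorem normalizingShift_of_mem_NB {G : WGraph} {b z : ℕ} (hb : G.Branch b) (hz : z ∈ G.NB) :
    G.normalizingShift b z = 0 := by
  have hh := (mem_branchesIn.1 (hub_mem_branchesIn hb.branchesIn_nonempty)).1
  rw [normalizingShift]
  split_ifs <;>
    simp [Pi.single_eq_of_ne (hb.ne_of_mem_NB hz), Pi.single_eq_of_ne (hh.ne_of_mem_NB hz)]

theorem birEq_add_normalizingShift {G : WGraph} {b : ℕ} (hb : G.Branch b) (w : ℕ → ℤ)
    (hw : ∀ z ∈ G.NB, w z = G.wt z) :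
    BirEq (G.withWt w) (G.withWt (w + G.normalizingShift b)) := by
  rw [normalizingShift]
  split_ifs with hend
  · simpa [sub_eq_add_neg] using birEq_drop_of_comp0HasEnd hb hend w hw
  · obtain ⟨hh, hhb⟩ := mem_branchesIn.1 (hub_mem_branchesIn hb.branchesIn_nonempty)
    have hlink := ((mem_comp0_cases hb hhb).resolve_right fun ⟨S, c, hS, hhS, _⟩ =>
      hh.notMem_NB (mem_NB_of_isSegment hS.1 hhS)).2
    simpa [sub_eq_add_neg, add_comm, add_left_comm] using birEq_transfer_of_linked hlink w hw

theorem birEq_withWt_add_sum_normalizingShift (G : WGraph) (s : Finset ℕ)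
    (hs : ∀ b ∈ s, G.Branch b) :
    BirEq G (G.withWt (G.wt + ∑ b ∈ s, G.wt b • G.normalizingShift b)) := by
  induction s using Finset.induction_on with
  | empty => simpa using BirEq.refl G
  | insert a s ha ih =>
    have ha' := hs a (Finset.mem_insert_self a s)
    have hs' : ∀ b ∈ s, G.Branch b := fun b hb => hs b (Finset.mem_insert_of_mem hb)
    have hw : ∀ z ∈ G.NB, (G.wt + ∑ b ∈ s, G.wt b • G.normalizingShift b) z = G.wt z :=
      fun z hz => by
        rw [Pi.add_apply, Finset.sum_apply, Finset.sum_eq_zero fun b hb => by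
          simp [normalizingShift_of_mem_NB (hs' b hb) hz], add_zero]
    have hstep := birEq_add_zsmul (fun z hz => normalizingShift_of_mem_NB ha' hz)
      (birEq_add_normalizingShift ha') (G.wt a) _ hw
    rw [Finset.sum_insert ha, add_comm (G.wt a • _), ← add_assoc]
    exact (ih hs').trans hstep

theorem birEq_withWt_normalizedWt (G : WGraph) : BirEq G (G.withWt G.normalizedWt) :=
  G.birEq_withWt_add_sum_normalizingShift _ fun _ hb => (Finset.mem_filter.1 hb).2

theorem Branch.hub_eq_iff {G : WGraph} {b v : ℕ} (hb : G.Branch b) :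
    (¬G.Comp0HasEnd b ∧ G.hub b = v) ↔
      b ∈ G.branchesIn v ∧ ¬G.Comp0HasEnd v ∧ G.hub v = v := by
  constructor
  · rintro ⟨hend, rfl⟩
    have hv := (mem_branchesIn.1 (hub_mem_branchesIn hb.branchesIn_nonempty)).2
    rw [hub_eq_of_mem hv, comp0HasEnd_iff_of_mem hv]
    exact ⟨mem_branchesIn.2 ⟨hb, mem_comp0_comm.1 hv⟩, hend, rfl⟩
  · rintro ⟨hbv, hend, hhub⟩
    have hbv := (mem_branchesIn.1 hbv).2
    rw [hub_eq_of_mem hbv, comp0HasEnd_iff_of_mem hbv]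
    exact ⟨hend, hhub⟩

theorem normalizedWt_apply (G : WGraph) (v : ℕ) :
    G.normalizedWt v = G.wt v - (if G.Branch v then G.wt v else 0) +
      if ¬G.Comp0HasEnd v ∧ G.hub v = v then ∑ b ∈ G.branchesIn v, G.wt b else 0 := by
  have key : ∀ b ∈ G.verts.filter G.Branch, (G.wt b • G.normalizingShift b) v =
      (if ¬G.Comp0HasEnd v ∧ G.hub v = v then if b ∈ G.branchesIn v then G.wt b else 0
        else 0) - if v = b then G.wt b else 0 := by
    intro b hb
    have h := (Finset.mem_filter.1 hb).2.hub_eq_iff (v := v)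
    simp only [normalizingShift, Pi.smul_apply, Pi.sub_apply, ite_apply, Pi.zero_apply,
      Pi.single_apply, smul_eq_mul]
    split_ifs <;> grind
  have hsub : G.branchesIn v ⊆ G.verts.filter G.Branch := fun b hb =>
    Finset.mem_filter.2 ⟨(mem_branchesIn.1 hb).1.1, (mem_branchesIn.1 hb).1⟩
  rw [normalizedWt, Pi.add_apply, Finset.sum_apply, Finset.sum_congr rfl key,
    Finset.sum_sub_distrib, Finset.sum_ite_eq]
  have hB : v ∈ G.verts.filter G.Branch ↔ G.Branch v :=
    Finset.mem_filter.trans (and_iff_right_of_imp fun h => h.1)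
  have hsum : (∑ b ∈ G.verts.filter G.Branch, if ¬G.Comp0HasEnd v ∧ G.hub v = v then
      if b ∈ G.branchesIn v then G.wt b else 0 else 0) =
      if ¬G.Comp0HasEnd v ∧ G.hub v = v then ∑ b ∈ G.branchesIn v, G.wt b else 0 := by
    split_ifs
    · rw [Finset.sum_ite_mem, Finset.inter_eq_right.2 hsub]
    · exact Finset.sum_const_zero
  rw [hsum, if_congr hB rfl rfl]
  ring

theorem normalizedWt_of_not_branch {G : WGraph} {v : ℕ} (hv : ¬G.Branch v) :
    G.normalizedWt v = G.wt v := by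
  have hsum :
      (if ¬G.Comp0HasEnd v ∧ G.hub v = v then ∑ b ∈ G.branchesIn v, G.wt b else 0) = 0 := by
    split_ifs with h
    · rcases (G.branchesIn v).eq_empty_or_nonempty with he | hne
      · simp [he]
      · exact absurd (h.2 ▸ (mem_branchesIn.1 (hub_mem_branchesIn hne)).1) hv
    · rfl
  rw [normalizedWt_apply, if_neg hv, hsum]
  ring

theorem normalizedWt_of_comp0HasEnd {G : WGraph} {b : ℕ} (hb : G.Branch b)
    (h : G.Comp0HasEnd b) : G.normalizedWt b = 0 := by
  rw [normalizedWt_apply, if_pos hb, if_neg fun h' => h'.1 h]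
  ring

theorem normalizedWt_hub {G : WGraph} {v : ℕ} (hv : (G.branchesIn v).Nonempty)
    (h : ¬G.Comp0HasEnd v) : G.normalizedWt (G.hub v) = ∑ b ∈ G.branchesIn v, G.wt b := by
  obtain ⟨hb, hcomp⟩ := mem_branchesIn.1 (hub_mem_branchesIn hv)
  rw [normalizedWt_apply, if_pos hb,
    if_pos ⟨(comp0HasEnd_iff_of_mem hcomp).not.2 h, hub_eq_of_mem hcomp⟩,
    branchesIn_eq_of_mem hcomp]
  ring

theorem normalizedWt_of_ne_hub {G : WGraph} {b : ℕ} (hb : G.Branch b) (hne : b ≠ G.hub b) :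
    G.normalizedWt b = 0 := by
  rw [normalizedWt_apply, if_pos hb, if_neg fun h => hne h.2.symm]
  ring

end WGraph

open WGraph in
theorem standard_birEq_branch_weights_normalized_general
    (Γ : WGraph) (hΓ : IsStandard Γ) :
    ∃ Γ' : WGraph, IsStandard Γ' ∧ BirEq Γ Γ' ∧
      Γ'.verts = Γ.verts ∧ (∀ a b, Γ'.adj a b = Γ.adj a b) ∧
      (∀ S : Set ℕ, Γ.IsSegment S → ∀ v ∈ S, Γ'.wt v = Γ.wt v) ∧
      (∀ v ∈ Γ.Gamma0V,
        ((∃ u ∈ Γ.Comp0 v, Γ.deg u = 1) →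
          ∀ b ∈ Γ.Comp0 v, Γ.Branch b → Γ'.wt b = 0) ∧
        ((∀ u ∈ Γ.Comp0 v, Γ.deg u ≠ 1) → (∃ b, Γ.Branch b ∧ b ∈ Γ.Comp0 v) →
          ∃ b0, Γ.Branch b0 ∧ b0 ∈ Γ.Comp0 v ∧
            Γ'.wt b0 = ∑ b ∈ Γ.verts.filter (fun b => Γ.Branch b ∧ b ∈ Γ.Comp0 v), Γ.wt b ∧
            ∀ b ∈ Γ.Comp0 v, Γ.Branch b → b ≠ b0 → Γ'.wt b = 0)) := by
  have hNB : ∀ z ∈ Γ.NB, Γ.normalizedWt z = Γ.wt z := fun z hz =>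
    normalizedWt_of_not_branch fun h => h.notMem_NB hz
  refine ⟨Γ.withWt Γ.normalizedWt, hΓ.withWt hNB, Γ.birEq_withWt_normalizedWt, rfl,
    fun _ _ => rfl, fun S hS v hv => hNB v (mem_NB_of_isSegment hS hv), fun v _ => ⟨?_, ?_⟩⟩
  · exact fun hend b hb hbr => normalizedWt_of_comp0HasEnd hbr ((comp0HasEnd_iff_of_mem hb).2 hend)
  · rintro hnend ⟨b, hbr, hb⟩
    have hne : (Γ.branchesIn v).Nonempty := ⟨b, mem_branchesIn.2 ⟨hbr, hb⟩⟩
    have hend : ¬Γ.Comp0HasEnd v := fun ⟨u, hu, hdu⟩ => hnend u hu hdu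
    obtain ⟨hhub, hhubv⟩ := mem_branchesIn.1 (hub_mem_branchesIn hne)
    refine ⟨Γ.hub v, hhub, hhubv, normalizedWt_hub hne hend, fun c hc hcbr hcne => ?_⟩
    exact normalizedWt_of_ne_hub hcbr (hub_eq_of_mem hc ▸ hcne)

open WGraph in
/-- Corollary 3.33′, normalization of branch weights: every
non-circular standard weighted graph `Γ` is birationally equivalent to a standard
weighted graph `Γ'` with the same underlying graph and the same weight sequences on
all linear segments, such that for every connected component `C` of `Γ₀`: if `C`
contains an end-vertex of `Γ` then every branching point in `C` has weight `0` in
`Γ'`, and otherwise every branching point in `C` has weight `0` in `Γ'` with one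
exception, whose `Γ'`-weight is the sum of the `Γ`-weights of the branching points
lying in `C`. -/
theorem standard_birEq_branch_weights_normalized
    (Γ : WGraph) (hΓ : IsStandard Γ) (hΓc : ¬ Γ.IsCircular) :
    ∃ Γ' : WGraph, IsStandard Γ' ∧ BirEq Γ Γ' ∧
      Γ'.verts = Γ.verts ∧ (∀ a b, Γ'.adj a b = Γ.adj a b) ∧
      (∀ S : Set ℕ, Γ.IsSegment S → ∀ v ∈ S, Γ'.wt v = Γ.wt v) ∧
      (∀ v ∈ Γ.Gamma0V,
        ((∃ u ∈ Γ.Comp0 v, Γ.deg u = 1) →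
          ∀ b ∈ Γ.Comp0 v, Γ.Branch b → Γ'.wt b = 0) ∧
        ((∀ u ∈ Γ.Comp0 v, Γ.deg u ≠ 1) → (∃ b, Γ.Branch b ∧ b ∈ Γ.Comp0 v) →
          ∃ b0, Γ.Branch b0 ∧ b0 ∈ Γ.Comp0 v ∧
            Γ'.wt b0 = ∑ b ∈ Γ.verts.filter (fun b => Γ.Branch b ∧ b ∈ Γ.Comp0 v), Γ.wt b ∧
            ∀ b ∈ Γ.Comp0 v, Γ.Branch b → b ≠ b0 → Γ'.wt b = 0)) :=
  standard_birEq_branch_weights_normalized_general Γ hΓ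
end

section
/- For every finite list of integers q and all integers a, b, the list (0, a) ++ q is linearly birationally equivalent to the list (0, b) ++ q. -/
/-- A single move on a linear weighted graph, viewed as the list of its integer
weights listed consecutively: an inner blowup at an edge between consecutive
entries `a, b` (replacing `(a, b)` by `(a-1, -1, b-1)`), an outer blowup at the
left end (replacing the end entry `a` by `(-1, a-1)`), or a reversal of the chain.
Blowdowns are the inverses of these moves. -/
inductive LinMove : List ℤ → List ℤ → Prop
  | inner (p q : List ℤ) (a b : ℤ) :
      LinMove (p ++ a :: b :: q) (p ++ (a - 1) :: (-1) :: (b - 1) :: q)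
  | outer (a : ℤ) (q : List ℤ) :
      LinMove (a :: q) ((-1) :: (a - 1) :: q)
  | rev (l : List ℤ) : LinMove l l.reverse

/-- Linear birational equivalence of chains of weights: the equivalence relation
generated by blowups, blowdowns (all intermediate graphs being chains) and
reversals. -/
def LinBirEq : List ℤ → List ℤ → Prop := Relation.EqvGen LinMove

/-! Blowing up the edge `(0, a)` of `(0, a, q…)` and blowing up the end `0` of `(0, a - 1, q…)`
both give `(-1, -1, a - 1, q…)`, so the weight next to an end zero can be lowered by one.
Since `LinBirEq` is an equivalence relation, that weight can then be moved to any integer. -/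

theorem Equivalence.of_forall_rel_sub_one {α : Type*} {r : α → α → Prop} (hr : Equivalence r)
    {f : ℤ → α} (h : ∀ n, r (f n) (f (n - 1))) (a b : ℤ) : r (f a) (f b) := by
  induction b using Int.inductionOn' (b := a) with
  | zero => exact hr.refl _
  | succ k _ ih => exact hr.trans ih (hr.symm (by simpa using h (k + 1)))
  | pred k _ ih => exact hr.trans ih (h k)

theorem LinBirEq.zero_cons_cons_sub_one (a : ℤ) (q : List ℤ) :
    LinBirEq (0 :: a :: q) (0 :: (a - 1) :: q) := by
  have blowup_edge : LinMove (0 :: a :: q) ((-1) :: (-1) :: (a - 1) :: q) := by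
    simpa using LinMove.inner [] q 0 a
  have blowup_end : LinMove (0 :: (a - 1) :: q) ((-1) :: (-1) :: (a - 1) :: q) := by
    simpa using LinMove.outer 0 ((a - 1) :: q)
  exact (Relation.EqvGen.rel _ _ blowup_edge).trans _ _ _ (.symm _ _ (.rel _ _ blowup_end))

/-- elementary transformation at an end zero: for every finite
list of integers `q` and all integers `a, b`, the chain `(0, a) ++ q` is linearly
birationally equivalent to the chain `(0, b) ++ q`. -/
theorem linBirEq_zero_head_arbitrary (q : List ℤ) (a b : ℤ) :
    LinBirEq (0 :: a :: q) (0 :: b :: q) :=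
  (Relation.EqvGen.is_equivalence LinMove).of_forall_rel_sub_one (f := fun c => 0 :: c :: q)
    (fun c => LinBirEq.zero_cons_cons_sub_one c q) a b
end

section
/- For every n >= 1 and all integers w_1, ..., w_n, the list (w_1, 0, w_2, 0, ..., 0, w_n) of length 2n-1 (the weights w_i alternating with single zeros) is linearly birationally equivalent to the list of the same length 2n-1 whose entries are all 0 except the last, which equals w_1 + w_2 + ... + w_n. -/
/-- The alternating list `(w 0, 0, w 1, 0, …, 0, w (n-1))` of length `2n - 1`:
the weights `w i` alternating with single zeros. -/
def altList : (n : ℕ) → (ℕ → ℤ) → List ℤ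
  | 0, _ => []
  | 1, w => [w 0]
  | n + 2, w => w 0 :: 0 :: altList (n + 1) (fun i => w (i + 1))

/-!
Blowing up the edge between `a` and a neighbouring `0` and blowing down the other new `-1`
moves one unit of weight across the zero: `(a, 0, b) ~ (a - 1, 0, b + 1)`. Iterating pushes the
whole weight across, `(a, 0, b) ~ (0, 0, a + b)`, and sweeping from left to right through
`(w₁, 0, w₂, 0, …, 0, wₙ)` accumulates `w₁ + ⋯ + wₙ` in the last entry.
-/

open Relation

namespace LinBirEq

protected theorem refl (l : List ℤ) : LinBirEq l l := EqvGen.refl l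

protected theorem symm {l₁ l₂ : List ℤ} (h : LinBirEq l₁ l₂) : LinBirEq l₂ l₁ := EqvGen.symm _ _ h

protected theorem trans {l₁ l₂ l₃ : List ℤ} (h₁₂ : LinBirEq l₁ l₂) (h₂₃ : LinBirEq l₂ l₃) :
    LinBirEq l₁ l₃ :=
  EqvGen.trans _ _ _ h₁₂ h₂₃

theorem inner_blowup (p q : List ℤ) (a b : ℤ) :
    LinBirEq (p ++ a :: b :: q) (p ++ (a - 1) :: (-1) :: (b - 1) :: q) :=
  EqvGen.rel _ _ (LinMove.inner p q a b)

/-- Both sides blow up to `(a - 1, -1, -1, b)`. -/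
theorem slide_across_zero (p q : List ℤ) (a b : ℤ) :
    LinBirEq (p ++ a :: 0 :: b :: q) (p ++ (a - 1) :: 0 :: (b + 1) :: q) := by
  have h₁ := inner_blowup p (b :: q) a 0
  have h₂ := inner_blowup (p ++ [a - 1]) q 0 (b + 1)
  simp only [zero_sub, add_sub_cancel_right, List.append_assoc, List.singleton_append] at h₁ h₂
  exact h₁.trans h₂.symm

theorem shift_across_zero (p q : List ℤ) (a b k : ℤ) :
    LinBirEq (p ++ a :: 0 :: b :: q) (p ++ (a - k) :: 0 :: (b + k) :: q) := by
  let f : ℤ → List ℤ := fun j => p ++ (a - j) :: 0 :: (b + j) :: q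
  have step (j : ℤ) : LinBirEq (f j) (f (j + 1)) := by
    have h := slide_across_zero p q (a - j) (b + j)
    rwa [sub_sub, add_assoc] at h
  have h : LinBirEq (f 0) (f k) := by
    rcases le_total 0 k with hk | hk
    · exact Int.rel_of_forall_rel_succ_of_le (EqvGen LinMove) step hk
    · exact (Int.rel_of_forall_rel_succ_of_le (EqvGen LinMove) step hk).symm
  simpa [f] using h

theorem collect_sum_across_zeros (p : List ℤ) (c : ℤ) (ws : List ℤ) :
    LinBirEq (p ++ c :: ws.flatMap (fun x => [0, x]))
      (p ++ List.replicate (2 * ws.length) 0 ++ [c + ws.sum]) := by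
  induction ws generalizing p c with
  | nil => simpa using LinBirEq.refl (p ++ [c])
  | cons x ws ih =>
    refine (shift_across_zero p (ws.flatMap fun x => [0, x]) c x c).trans ?_
    rw [sub_self]
    convert ih (p ++ [0, 0]) (x + c) using 1
    · simp
    · simp [Nat.mul_succ, List.replicate_succ, add_comm x c, add_assoc]

end LinBirEq

theorem altList_succ (n : ℕ) (w : ℕ → ℤ) :
    altList (n + 1) w =
      w 0 :: ((List.range n).map (fun i => w (i + 1))).flatMap (fun x => [0, x]) := by
  induction n generalizing w with
  | zero => rfl
  | succ n ih => simp [altList, ih, List.range_succ_eq_map, Function.comp_def]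

/-- for every `n ≥ 1` and all integers `w₁, …, wₙ`, the chain
`(w₁, 0, w₂, 0, …, 0, wₙ)` of length `2n - 1` is linearly birationally equivalent
to the chain of the same length `2n - 1` whose entries are all `0` except the last,
which equals `w₁ + w₂ + ⋯ + wₙ`. -/
theorem linBirEq_alternating_zeros_collect_sum (n : ℕ) (hn : 1 ≤ n) (w : ℕ → ℤ) :
    LinBirEq (altList n w)
      (List.replicate (2 * n - 2) 0 ++ [∑ i ∈ Finset.range n, w i]) := by
  obtain ⟨m, rfl⟩ := Nat.exists_eq_add_of_le' hn
  have hsum : ∑ i ∈ Finset.range (m + 1), w i =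
      w 0 + ((List.range m).map fun i => w (i + 1)).sum := by
    rw [Finset.sum_range_succ', add_comm, Finset.sum_eq_multiset_sum, Finset.range_val,
      Multiset.range, Multiset.map_coe, Multiset.sum_coe]
  have hlen : 2 * (m + 1) - 2 = 2 * ((List.range m).map fun i => w (i + 1)).length := by
    rw [List.length_map, List.length_range]; omega
  rw [altList_succ, hsum, hlen]
  exact LinBirEq.collect_sum_across_zeros [] (w 0) _
end
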